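/- Let q ≥ 2, θ ∈ ℝ, and define T(N) := (1/N) Σ_{n=0}^{N−1} exp(2πi · s_q(n) · θ). Then for every m ∈ ℕ₀, |T(q^m)| ≤ (1 − (16(q−1)/q²)·‖θ‖²)^{m/2}. -/

import Mathlib

open Finset Real

/-! The `q`-ary digits of `n < q ^ m` run independently through `{0, …, q - 1}`, so
`T(q ^ m) = F ^ m` with `F = q⁻¹ ∑_{j < q} z ^ j` and `z = exp(2πiθ)`. For vectors `x₀, …, xₙ`,
`∑_{j,k} ‖x_j - x_k‖² = 2(n+1) ∑ ‖x_j‖² - 2 ‖∑ x_j‖²`; keeping only the adjacent pairs on the left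
and taking `x_j = z ^ j` gives `‖∑_{j < q} z ^ j‖² ≤ q² - (q - 1) ‖z - 1‖²`. Finally
`‖z - 1‖ = 2 |sin πθ| ≥ 4 ‖θ‖`. -/

/-- `T(N) = (1/N) Σ_{n=0}^{N−1} exp(2πi · s_q(n) · θ)`, where `s_q` is the `q`-ary
sum-of-digits function. -/
noncomputable def Tsod (q : ℕ) (θ : ℝ) (N : ℕ) : ℂ :=
  (N : ℂ)⁻¹ * ∑ n ∈ Finset.range N,
    Complex.exp (2 * Real.pi * Complex.I * ((Nat.digits q n).sum : ℂ) * (θ : ℂ))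

theorem sum_range_mul_eq_sum_sum {M : Type*} [AddCommMonoid M] (f : ℕ → M) (a b : ℕ) :
    ∑ n ∈ range (a * b), f n = ∑ i ∈ range a, ∑ j ∈ range b, f (b * i + j) := by
  induction a with
  | zero => simp
  | succ a ih =>
    rw [sum_range_succ, ← ih, Nat.succ_mul, sum_range_add, mul_comm b a]

theorem Nat.digits_sum_add_mul {q : ℕ} (hq : 2 ≤ q) (i : ℕ) {j : ℕ} (hj : j < q) :
    (Nat.digits q (j + q * i)).sum = j + (Nat.digits q i).sum := by
  rcases eq_or_ne j 0 with rfl | hj0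
  · rcases eq_or_ne i 0 with rfl | hi0
    · simp
    · rw [Nat.digits_add q hq 0 i hj (Or.inr hi0), List.sum_cons]
  · rw [Nat.digits_add q hq j i hj (Or.inl hj0), List.sum_cons]

theorem sum_pow_digits_sum_range_pow {R : Type*} [CommSemiring R] {q : ℕ} (hq : 2 ≤ q)
    (w : R) (m : ℕ) :
    ∑ n ∈ range (q ^ m), w ^ (Nat.digits q n).sum = (∑ j ∈ range q, w ^ j) ^ m := by
  induction m with
  | zero => simp
  | succ m ih =>
    calc ∑ n ∈ range (q ^ (m + 1)), w ^ (Nat.digits q n).sum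
        = ∑ i ∈ range (q ^ m), ∑ j ∈ range q, w ^ j * w ^ (Nat.digits q i).sum := by
          rw [pow_succ, sum_range_mul_eq_sum_sum]
          refine sum_congr rfl fun i _ => sum_congr rfl fun j hj => ?_
          rw [add_comm, Nat.digits_sum_add_mul hq i (mem_range.mp hj), pow_add]
      _ = (∑ j ∈ range q, w ^ j) ^ (m + 1) := by
          rw [sum_comm, ← sum_mul_sum, ih, pow_succ']

theorem Tsod_pow_eq {q : ℕ} (hq : 2 ≤ q) (θ : ℝ) (m : ℕ) :
    Tsod q θ (q ^ m) =
      ((q : ℂ)⁻¹ * ∑ j ∈ range q, Complex.exp (2 * π * Complex.I * θ) ^ j) ^ m := by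
  have hexp (s : ℕ) : Complex.exp (2 * π * Complex.I * s * θ) =
      Complex.exp (2 * π * Complex.I * θ) ^ s := by
    rw [← Complex.exp_nat_mul]; ring_nf
  simp only [Tsod, hexp, sum_pow_digits_sum_range_pow hq, mul_pow, inv_pow, Nat.cast_pow]

theorem sum_sum_sq_norm_sub {ι E : Type*} [NormedAddCommGroup E] [InnerProductSpace ℝ E]
    (s : Finset ι) (x : ι → E) :
    ∑ j ∈ s, ∑ k ∈ s, ‖x j - x k‖ ^ 2 =
      2 * #s * ∑ j ∈ s, ‖x j‖ ^ 2 - 2 * ‖∑ j ∈ s, x j‖ ^ 2 := by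
  simp only [norm_sub_sq_real, sum_add_distrib, sum_sub_distrib, ← mul_sum, sum_const,
    nsmul_eq_mul, ← real_inner_self_eq_norm_sq (∑ j ∈ s, x j), sum_inner, inner_sum]
  rw [sum_comm (s := s) (t := s) (f := fun j k => inner ℝ (x k) (x j))]
  ring

theorem sum_adjacent_le_sum_sum_range {f : ℕ → ℕ → ℝ} (hf : ∀ j k, 0 ≤ f j k) (n : ℕ) :
    ∑ j ∈ range n, (f (j + 1) j + f j (j + 1)) ≤
      ∑ j ∈ range (n + 1), ∑ k ∈ range (n + 1), f j k := by
  induction n with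
  | zero => simpa using hf 0 0
  | succ n ih =>
    have hrow : f (n + 1) n ≤ ∑ k ∈ range (n + 2), f (n + 1) k :=
      single_le_sum (f := f (n + 1)) (fun k _ => hf _ k) (mem_range.mpr (by omega))
    have hcol : f n (n + 1) ≤ ∑ j ∈ range (n + 1), f j (n + 1) :=
      single_le_sum (f := (f · (n + 1))) (fun j _ => hf j _) (mem_range.mpr (by omega))
    have hsplit : ∑ j ∈ range (n + 1), ∑ k ∈ range (n + 2), f j k =
        ∑ j ∈ range (n + 1), ∑ k ∈ range (n + 1), f j k + ∑ j ∈ range (n + 1), f j (n + 1) := by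
      rw [← sum_add_distrib]
      exact sum_congr rfl fun j _ => sum_range_succ _ _
    rw [sum_range_succ, sum_range_succ (fun j => ∑ k ∈ range (n + 2), f j k), hsplit]
    linarith

theorem sq_norm_sum_range_succ_le {E : Type*} [NormedAddCommGroup E] [InnerProductSpace ℝ E]
    (x : ℕ → E) (n : ℕ) :
    ‖∑ j ∈ range (n + 1), x j‖ ^ 2 ≤
      (n + 1) * ∑ j ∈ range (n + 1), ‖x j‖ ^ 2 - ∑ j ∈ range n, ‖x (j + 1) - x j‖ ^ 2 := by
  have hadj := sum_adjacent_le_sum_sum_range (f := fun j k => ‖x j - x k‖ ^ 2)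
    (fun _ _ => sq_nonneg _) n
  simp only [norm_sub_rev (x _) (x (_ + 1)), ← two_mul, ← mul_sum, sum_sum_sq_norm_sub,
    card_range] at hadj
  push_cast at hadj
  linarith

theorem sq_norm_geom_sum_le {z : ℂ} (hz : ‖z‖ = 1) (n : ℕ) :
    ‖∑ j ∈ range n, z ^ j‖ ^ 2 ≤ n ^ 2 - (n - 1) * ‖z - 1‖ ^ 2 := by
  rcases n with _ | n
  · simp only [range_zero, sum_empty, norm_zero]; norm_num
  have hstep (j : ℕ) : ‖z ^ (j + 1) - z ^ j‖ = ‖z - 1‖ := by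
    rw [pow_succ, ← mul_sub_one, norm_mul, norm_pow, hz, one_pow, one_mul]
  have := sq_norm_sum_range_succ_le (fun j => z ^ j) n
  simp only [hstep, norm_pow, hz, one_pow, sum_const, card_range, nsmul_eq_mul] at this
  push_cast at this ⊢
  linarith

theorem four_mul_abs_sub_round_le_norm_exp_sub_one (θ : ℝ) :
    4 * |θ - round θ| ≤ ‖Complex.exp (2 * π * Complex.I * θ) - 1‖ := by
  have hperiod : Complex.exp (2 * π * Complex.I * θ) =
      Complex.exp (Complex.I * ↑(2 * π * (θ - round θ))) := by
    rw [← mul_one (Complex.exp (Complex.I * _)), ← Complex.exp_int_mul_two_pi_mul_I (round θ),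
      ← Complex.exp_add]
    push_cast; ring_nf
  have hsmall : |π * (θ - round θ)| ≤ π / 2 := by
    rw [abs_mul, abs_of_pos pi_pos]
    nlinarith [abs_sub_round θ, pi_pos]
  rw [hperiod, Complex.norm_exp_I_mul_ofReal_sub_one, norm_mul, Real.norm_eq_abs,
    Real.norm_eq_abs, abs_two, show 2 * π * (θ - round θ) / 2 = π * (θ - round θ) by ring]
  have := mul_abs_le_abs_sin hsmall
  rw [abs_mul, abs_of_pos pi_pos] at this
  field_simp at this
  linarith

theorem pow_eq_rpow_sq_div_two {a : ℝ} (ha : 0 ≤ a) (m : ℕ) : a ^ m = (a ^ 2) ^ ((m : ℝ) / 2) := by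
  rw [← Real.rpow_natCast_mul ha, Nat.cast_ofNat, mul_div_cancel₀ _ two_ne_zero, Real.rpow_natCast]

/-- For `q ≥ 2`, `θ ∈ ℝ` and every `m ∈ ℕ`,
`|T(q^m)| ≤ (1 − (16(q−1)/q²)·‖θ‖²)^{m/2}`, where `‖θ‖` is the distance of `θ`
to the nearest integer. -/
theorem Tsod_pow_le (q : ℕ) (hq : 2 ≤ q) (θ : ℝ) (m : ℕ) :
    ‖Tsod q θ (q ^ m)‖ ≤
      (1 - 16 * ((q : ℝ) - 1) / (q : ℝ) ^ 2 * |θ - round θ| ^ 2) ^ ((m : ℝ) / 2) := by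
  set z := Complex.exp (2 * π * Complex.I * θ)
  have hz : ‖z‖ = 1 := by
    simpa [z, mul_comm _ Complex.I, mul_assoc] using Complex.norm_exp_ofReal_mul_I (2 * π * θ)
  have hq1 : (1 : ℝ) ≤ q := by exact_mod_cast (by omega : 1 ≤ q)
  rw [Tsod_pow_eq hq, norm_pow, pow_eq_rpow_sq_div_two (norm_nonneg _)]
  refine Real.rpow_le_rpow (by positivity) ?_ (by positivity)
  calc ‖(q : ℂ)⁻¹ * ∑ j ∈ range q, z ^ j‖ ^ 2 = ‖∑ j ∈ range q, z ^ j‖ ^ 2 / (q : ℝ) ^ 2 := by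
        rw [norm_mul, norm_inv, Complex.norm_natCast, mul_pow, inv_pow, inv_mul_eq_div]
    _ ≤ ((q : ℝ) ^ 2 - (q - 1) * ‖z - 1‖ ^ 2) / (q : ℝ) ^ 2 := by
        gcongr; exact sq_norm_geom_sum_le hz q
    _ ≤ ((q : ℝ) ^ 2 - (q - 1) * (4 * |θ - round θ|) ^ 2) / (q : ℝ) ^ 2 := by
        have := four_mul_abs_sub_round_le_norm_exp_sub_one θ
        gcongr
    _ = 1 - 16 * ((q : ℝ) - 1) / (q : ℝ) ^ 2 * |θ - round θ| ^ 2 := by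
        field_simp
        ring
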